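/- Let k ≥ 2 and let H = (V,E) be a hypergraph in the class ℋ_k. Then the chromatic index of H satisfies q(H) ≤ Δ([H]_2), where Δ([H]_2) is the maximum degree of the 2-section of H. -/

import Mathlib

open Finset

variable {V : Type*}

/-- The degree of a vertex `x`: number of hyperedges containing `x`. -/
def hyperDeg [DecidableEq V] (E : Finset (Finset V)) (x : V) : ℕ :=
  (E.filter fun e => x ∈ e).card

/-- A hypergraph is linear if two distinct hyperedges share at most one vertex. -/
def Linear [DecidableEq V] (E : Finset (Finset V)) : Prop :=
  ∀ e ∈ E, ∀ f ∈ E, e ≠ f → (e ∩ f).card ≤ 1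

/-- The degree of a hyperedge `e`: number of other hyperedges meeting `e`. -/
def edgeDeg [DecidableEq V] (E : Finset (Finset V)) (e : Finset V) : ℕ :=
  (E.filter fun a => a ≠ e ∧ (a ∩ e).Nonempty).card

/-- Degree of a vertex in the 2-section of the hypergraph. -/
def deg2 [Fintype V] [DecidableEq V] (E : Finset (Finset V)) (x : V) : ℕ :=
  (Finset.univ.filter fun y => y ≠ x ∧ ∃ e ∈ E, x ∈ e ∧ y ∈ e).card

/-- Maximum degree of the 2-section. -/
def maxDeg2 [Fintype V] [DecidableEq V] (E : Finset (Finset V)) : ℕ :=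
  Finset.univ.sup (deg2 E)

/-- Minimum degree of the 2-section. -/
noncomputable def minDeg2 [Fintype V] [DecidableEq V] (E : Finset (Finset V)) : ℕ :=
  sInf (Set.range (deg2 E))

/-- Maximum vertex degree of the hypergraph. -/
def maxDeg [Fintype V] [DecidableEq V] (E : Finset (Finset V)) : ℕ :=
  Finset.univ.sup (hyperDeg E)

/-- A proper hyperedge coloring with `q` colors. -/
def ColorableWith [DecidableEq V] (E : Finset (Finset V)) (q : ℕ) : Prop :=
  ∃ c : Finset V → Fin q, ∀ e ∈ E, ∀ f ∈ E, e ≠ f → (e ∩ f).Nonempty → c e ≠ c f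

/-- The chromatic index: least number of colors in a proper hyperedge coloring. -/
noncomputable def chromIndex [DecidableEq V] (E : Finset (Finset V)) : ℕ :=
  sInf {q | ColorableWith E q}

/-!
Counting degrees, `k (k² + 1) = k (k + 1) + k (k² - k)` forces every vertex outside `e₀` to have
degree exactly `k`, and a vertex of `e₀` lies on `k + 1` edges meeting only there, so it has
`(k + 1)(k - 1) = k² - 1` neighbours in `[H]₂`. It remains to colour `E ∖ {e₀}` with `k² - 2`
colours and give `e₀` a fresh one. Every vertex has degree at most `k` in `E ∖ {e₀}`, so for
`k ≥ 3` an edge there meets at most `k (k - 1) < k² - 2` others and a greedy colouring works.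
For `k = 2`, every edge meets `e₀` (the `k²` edges through the vertices of `e₀` are all the
others), so the edges other than `e₀` lie in the 4-cycle `K_{2,2}` between `e₀` and its
complement, which is 2-edge-colourable.
-/

section Hypergraph

variable [DecidableEq V] {E F : Finset (Finset V)} {k : ℕ}

theorem Linear.inter_eq_singleton (hE : Linear E) {e f : Finset V} (he : e ∈ E) (hf : f ∈ E)
    (hef : e ≠ f) {x : V} (hxe : x ∈ e) (hxf : x ∈ f) : e ∩ f = {x} :=
  (eq_of_subset_of_card_le (singleton_subset_iff.2 (mem_inter.2 ⟨hxe, hxf⟩))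
    (by simpa using hE e he f hf hef)).symm

theorem Linear.mono (hE : Linear E) (hFE : F ⊆ E) : Linear F :=
  fun e he f hf => hE e (hFE he) f (hFE hf)

theorem sum_hyperDeg [Fintype V] (E : Finset (Finset V)) :
    ∑ x, hyperDeg E x = ∑ e ∈ E, e.card := by
  simp only [hyperDeg, card_filter]
  rw [sum_comm]
  exact sum_congr rfl fun e _ => by simp

theorem hyperDeg_erase_le (e : Finset V) (x : V) : hyperDeg (E.erase e) x ≤ hyperDeg E x := by
  rw [hyperDeg, hyperDeg, filter_erase]
  exact card_erase_le

theorem hyperDeg_erase_add_one {e : Finset V} (he : e ∈ E) {x : V} (hx : x ∈ e) :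
    hyperDeg (E.erase e) x + 1 = hyperDeg E x := by
  rw [hyperDeg, hyperDeg, filter_erase]
  exact card_erase_add_one (mem_filter.2 ⟨he, hx⟩)

theorem Linear.edgeDeg_eq_sum (hE : Linear E) {e : Finset V} (he : e ∈ E) :
    edgeDeg E e = ∑ x ∈ e, (hyperDeg E x - 1) := by
  have hsplit : E.filter (fun a => a ≠ e ∧ (a ∩ e).Nonempty) =
      e.biUnion fun x => (E.filter (x ∈ ·)).erase e := by
    ext f
    simp only [mem_filter, mem_biUnion, mem_erase, Finset.Nonempty, mem_inter]
    grind
  rw [edgeDeg, hsplit, card_biUnion]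
  · refine sum_congr rfl fun x hx => ?_
    rw [card_erase_of_mem (mem_filter.2 ⟨he, hx⟩), hyperDeg]
  · intro x hx y hy hxy
    refine disjoint_left.2 fun f hfx hfy => hxy ?_
    simp only [mem_erase, mem_filter] at hfx hfy
    have h := hE.inter_eq_singleton hfx.2.1 he hfx.1 hfx.2.2 hx
    have hy' : y ∈ f ∩ e := mem_inter.2 ⟨hfy.2.2, hy⟩
    rw [h, mem_singleton] at hy'
    exact hy'.symm

theorem Linear.deg2_eq [Fintype V] (hE : Linear E) (huni : ∀ e ∈ E, e.card = k) (x : V) :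
    deg2 E x = hyperDeg E x * (k - 1) := by
  have hsplit : univ.filter (fun y => y ≠ x ∧ ∃ e ∈ E, x ∈ e ∧ y ∈ e) =
      (E.filter (x ∈ ·)).biUnion fun e => e.erase x := by
    ext y
    simp only [mem_filter, mem_univ, true_and, mem_biUnion, mem_erase]
    grind
  rw [deg2, hsplit, card_biUnion, hyperDeg, ← smul_eq_mul, ← sum_const]
  · refine sum_congr rfl fun e he => ?_
    rw [mem_filter] at he
    rw [card_erase_of_mem he.2, huni e he.1]
  · intro e he f hf hef
    refine disjoint_left.2 fun y hye hyf => (mem_erase.1 hye).1 ?_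
    rw [mem_coe, mem_filter] at he hf
    have hy : y ∈ e ∩ f := mem_inter.2 ⟨(mem_erase.1 hye).2, (mem_erase.1 hyf).2⟩
    rwa [hE.inter_eq_singleton he.1 hf.1 hef he.2 hf.2, mem_singleton] at hy

end Hypergraph

section Coloring

variable [DecidableEq V] {E : Finset (Finset V)} {q : ℕ}

def IsProperEdgeColoring {α : Type*} (E : Finset (Finset V)) (c : Finset V → α) : Prop :=
  ∀ e ∈ E, ∀ f ∈ E, e ≠ f → (e ∩ f).Nonempty → c e ≠ c f

theorem IsProperEdgeColoring.update_insert {α : Type*} {c : Finset V → α}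
    (hc : IsProperEdgeColoring E c) {a : Finset V} (ha : a ∉ E) {col : α}
    (hcol : ∀ f ∈ E, (f ∩ a).Nonempty → c f ≠ col) :
    IsProperEdgeColoring (insert a E) (Function.update c a col) := by
  have hne : ∀ f ∈ E, f ≠ a := fun f hf h => ha (h ▸ hf)
  intro e he f hf hef hint
  rcases mem_insert.1 he with rfl | heE <;> rcases mem_insert.1 hf with rfl | hfE
  · exact absurd rfl hef
  · rw [Function.update_self, Function.update_of_ne (hne f hfE)]
    exact (hcol f hfE (inter_comm e f ▸ hint)).symm
  · rw [Function.update_self, Function.update_of_ne (hne e heE)]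
    exact hcol e heE hint
  · rw [Function.update_of_ne (hne e heE), Function.update_of_ne (hne f hfE)]
    exact hc e heE f hfE hef hint

theorem edgeDeg_mono {F : Finset (Finset V)} (hFE : F ⊆ E) (e : Finset V) :
    edgeDeg F e ≤ edgeDeg E e :=
  card_le_card (filter_subset_filter _ hFE)

theorem colorableWith_of_edgeDeg_lt (hq : 0 < q) (h : ∀ e ∈ E, edgeDeg E e < q) :
    ColorableWith E q := by
  induction E using Finset.induction_on with
  | empty => exact ⟨fun _ => ⟨0, hq⟩, by simp⟩
  | @insert a E ha ih =>
    obtain ⟨c, hc⟩ := ih fun e he =>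
      (edgeDeg_mono (subset_insert a E) e).trans_lt (h e (mem_insert_of_mem he))
    set N := E.filter fun f => f ≠ a ∧ (f ∩ a).Nonempty
    have hN : (N.image c).card < (univ : Finset (Fin q)).card := calc
      (N.image c).card ≤ N.card := card_image_le
      _ ≤ edgeDeg (insert a E) a := edgeDeg_mono (subset_insert a E) a
      _ < q := h a (mem_insert_self a E)
      _ = _ := (card_fin q).symm
    obtain ⟨col, -, hcol⟩ := exists_mem_notMem_of_card_lt_card hN
    refine ⟨Function.update c a col, IsProperEdgeColoring.update_insert hc ha fun f hf hfa => ?_⟩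
    rintro rfl
    exact hcol (mem_image_of_mem c (mem_filter.2 ⟨hf, fun h => ha (h ▸ hf), hfa⟩))

theorem ColorableWith.of_erase {e : Finset V} (he : e ∈ E) (h : ColorableWith (E.erase e) q) :
    ColorableWith E (q + 1) := by
  obtain ⟨c, hc⟩ := h
  have hcast : IsProperEdgeColoring (E.erase e) (Fin.castSucc ∘ c) :=
    fun f hf g hg hfg hint => (Fin.castSucc_injective q).ne (hc f hf g hg hfg hint)
  refine ⟨Function.update (Fin.castSucc ∘ c) e (Fin.last q), ?_⟩
  rw [← insert_erase he]
  exact hcast.update_insert (notMem_erase e E) fun f _ _ => Fin.castSucc_ne_last (c f)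

theorem colorableWith_two_of_forall_eq_pair {A B : Finset V} (hA : A.card = 2) (hB : B.card = 2)
    (hAB : Disjoint A B) (hE : ∀ f ∈ E, ∃ x ∈ A, ∃ y ∈ B, f = {x, y}) :
    ColorableWith E 2 := by
  obtain ⟨a, a', haa', rfl⟩ := card_eq_two.1 hA
  obtain ⟨b, b', hbb', rfl⟩ := card_eq_two.1 hB
  simp only [disjoint_insert_left, disjoint_insert_right, mem_insert, mem_singleton,
    disjoint_singleton, not_or] at hAB
  refine ⟨fun f => if (a ∈ f ↔ b ∈ f) then 0 else 1, fun e he f hf hef hint => ?_⟩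
  obtain ⟨x, hx, y, hy, rfl⟩ := hE e he
  obtain ⟨x', hx', y', hy', rfl⟩ := hE f hf
  simp only [mem_insert, mem_singleton] at hx hy hx' hy'
  grind

end Coloring

section ClassH

variable [Fintype V] [DecidableEq V]

structure ClassH (k : ℕ) (E : Finset (Finset V)) (e₀ : Finset V) : Prop where
  linear : Linear E
  card_of_mem : ∀ e ∈ E, e.card = k
  card_vertices : Fintype.card V = k ^ 2
  card_edges : E.card = k ^ 2 + 1
  mem : e₀ ∈ E
  hyperDeg_of_mem : ∀ x ∈ e₀, hyperDeg E x = k + 1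
  le_hyperDeg : ∀ x, x ∉ e₀ → k ≤ hyperDeg E x

namespace ClassH

variable {k : ℕ} {E : Finset (Finset V)} {e₀ : Finset V}

theorem card_e₀ (H : ClassH k E e₀) : e₀.card = k := H.card_of_mem e₀ H.mem

theorem card_compl_e₀ (H : ClassH k E e₀) : (univ \ e₀).card + k = k ^ 2 := by
  have := card_sdiff_add_card_eq_card (subset_univ e₀)
  rwa [card_univ, H.card_vertices, H.card_e₀] at this

theorem hyperDeg_of_not_mem (H : ClassH k E e₀) {x : V} (hx : x ∉ e₀) : hyperDeg E x = k := by
  have htotal : ∑ x, hyperDeg E x = (k ^ 2 + 1) * k := by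
    rw [sum_hyperDeg, sum_congr rfl H.card_of_mem, sum_const, H.card_edges, smul_eq_mul]
  have he₀ : ∑ x ∈ e₀, hyperDeg E x = k * (k + 1) := by
    rw [sum_congr rfl H.hyperDeg_of_mem, sum_const, H.card_e₀, smul_eq_mul]
  have hout : ∑ _x ∈ univ \ e₀, k = ∑ x ∈ univ \ e₀, hyperDeg E x := by
    have hsplit := sum_sdiff (f := hyperDeg E) (subset_univ e₀)
    have hcompl := H.card_compl_e₀
    rw [sum_const, smul_eq_mul]
    nlinarith
  exact ((sum_eq_sum_iff_of_le fun y hy => H.le_hyperDeg y (mem_sdiff.1 hy).2).1 hout x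
    (mem_sdiff.2 ⟨mem_univ x, hx⟩)).symm

theorem hyperDeg_erase_le (H : ClassH k E e₀) (x : V) : hyperDeg (E.erase e₀) x ≤ k := by
  by_cases hx : x ∈ e₀
  · have := hyperDeg_erase_add_one H.mem hx
    rw [H.hyperDeg_of_mem x hx] at this
    omega
  · exact (_root_.hyperDeg_erase_le e₀ x).trans (H.hyperDeg_of_not_mem hx).le

theorem inter_nonempty (H : ClassH k E e₀) {e : Finset V} (he : e ∈ E) (hne : e ≠ e₀) :
    (e ∩ e₀).Nonempty := by
  have hcard : (E.erase e₀).card ≤ edgeDeg E e₀ := by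
    rw [H.linear.edgeDeg_eq_sum H.mem, sum_congr rfl fun x hx => by rw [H.hyperDeg_of_mem x hx],
      sum_const, H.card_e₀, card_erase_of_mem H.mem, H.card_edges, smul_eq_mul]
    simp [sq]
  have hsub : E.filter (fun a => a ≠ e₀ ∧ (a ∩ e₀).Nonempty) ⊆ E.erase e₀ :=
    fun a ha => mem_erase.2 ⟨(mem_filter.1 ha).2.1, (mem_filter.1 ha).1⟩
  have hmeet := (eq_of_subset_of_card_le hsub hcard).symm ▸ mem_erase.2 ⟨hne, he⟩
  exact (mem_filter.1 hmeet).2.2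

theorem edgeDeg_erase_lt (H : ClassH k E e₀) (hk : 3 ≤ k) {e : Finset V}
    (he : e ∈ E.erase e₀) : edgeDeg (E.erase e₀) e < k ^ 2 - 2 := calc
  edgeDeg (E.erase e₀) e = ∑ x ∈ e, (hyperDeg (E.erase e₀) x - 1) :=
    (H.linear.mono (erase_subset e₀ E)).edgeDeg_eq_sum he
  _ ≤ ∑ _x ∈ e, (k - 1) :=
    sum_le_sum fun x _ => Nat.sub_le_sub_right (H.hyperDeg_erase_le x) 1
  _ = k * (k - 1) := by rw [sum_const, H.card_of_mem e (mem_of_mem_erase he), smul_eq_mul]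
  _ < k ^ 2 - 2 := by
    obtain ⟨m, rfl⟩ : ∃ m, k = m + 3 := ⟨k - 3, by omega⟩
    have : (m + 3) ^ 2 = (m + 3) * (m + 2) + m + 3 := by ring
    rw [show m + 3 - 1 = m + 2 by omega]
    omega

theorem exists_eq_pair (H : ClassH 2 E e₀) {f : Finset V} (hf : f ∈ E.erase e₀) :
    ∃ x ∈ e₀, ∃ y ∈ univ \ e₀, f = {x, y} := by
  obtain ⟨hne, hfE⟩ := mem_erase.1 hf
  obtain ⟨x, hx⟩ := H.inter_nonempty hfE hne
  obtain ⟨hxf, hxe₀⟩ := mem_inter.1 hx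
  have hinter := H.linear.inter_eq_singleton hfE H.mem hne hxf hxe₀
  obtain ⟨y, hyf, hyx⟩ := exists_mem_ne (by rw [H.card_of_mem f hfE]; omega) x
  have hy : y ∉ e₀ := fun hy => hyx (by simpa [hinter] using mem_inter.2 ⟨hyf, hy⟩)
  refine ⟨x, hxe₀, y, mem_sdiff.2 ⟨mem_univ y, hy⟩, ?_⟩
  refine (eq_of_subset_of_card_le ?_ ?_).symm
  · exact insert_subset hxf (singleton_subset_iff.2 hyf)
  · rw [H.card_of_mem f hfE, card_pair hyx.symm]

theorem colorableWith_erase (H : ClassH k E e₀) (hk : 2 ≤ k) :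
    ColorableWith (E.erase e₀) (k ^ 2 - 2) := by
  rcases hk.eq_or_lt with rfl | hk
  · have hcompl := H.card_compl_e₀
    exact colorableWith_two_of_forall_eq_pair H.card_e₀ (by omega) disjoint_sdiff
      fun f hf => H.exists_eq_pair hf
  · have : 9 ≤ k ^ 2 := by nlinarith
    exact colorableWith_of_edgeDeg_lt (by omega) fun e he => H.edgeDeg_erase_lt hk he

theorem le_maxDeg2 (H : ClassH k E e₀) (hk : 1 ≤ k) : k ^ 2 - 1 ≤ maxDeg2 E := by
  obtain ⟨x, hx⟩ : e₀.Nonempty := card_pos.1 (H.card_e₀ ▸ hk)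
  calc k ^ 2 - 1 = (k + 1) * (k - 1) := by simpa using Nat.sq_sub_sq k 1
    _ = deg2 E x := by rw [H.linear.deg2_eq H.card_of_mem, H.hyperDeg_of_mem x hx]
    _ ≤ maxDeg2 E := le_sup (mem_univ x)

end ClassH

end ClassH

theorem stmt11 {V : Type*} [Fintype V] [DecidableEq V] (k : ℕ) (hk : 2 ≤ k)
    (E : Finset (Finset V)) (e₀ : Finset V)
    (hlin : Linear E) (huni : ∀ e ∈ E, e.card = k)
    (hV : Fintype.card V = k ^ 2) (hEcard : E.card = k ^ 2 + 1)
    (he₀ : e₀ ∈ E) (hdeg₀ : ∀ x ∈ e₀, hyperDeg E x = k + 1)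
    (hdeg : ∀ x : V, x ∉ e₀ → k ≤ hyperDeg E x) :
    chromIndex E ≤ maxDeg2 E := by
  have H : ClassH k E e₀ := ⟨hlin, huni, hV, hEcard, he₀, hdeg₀, hdeg⟩
  have hcol : ColorableWith E (k ^ 2 - 2 + 1) := (H.colorableWith_erase hk).of_erase he₀
  have hk2 : 4 ≤ k ^ 2 := by nlinarith
  calc chromIndex E ≤ k ^ 2 - 2 + 1 := Nat.sInf_le hcol
    _ = k ^ 2 - 1 := by omega
    _ ≤ maxDeg2 E := H.le_maxDeg2 (by omega)
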